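/- arXiv:1609.00750 — 2 statements merged into one kernel-verified Lean document; each statement's English description precedes it below -/
import Mathlib

section
/- Let $G \sim G(n, p)$ with $p = \frac{40 \log n}{n}$, fix a positive integer $t$ and $0 < \alpha < 1$, and let $L = \log n / \log\log n$. Then the probability that there exists a vertex subset $S$ with $|S| \le \alpha t L$ and at least $|S| + t$ edges inside $S$ is at most $\sum_{s \le \alpha t L} \binom{n}{s} \binom{\binom{s}{2}}{s+t} p^{s+t}$, and this quantity is $O(n^{-(1-\alpha-o(1))t})$, tending to $0$ as $n \to \infty$. -/
/-! Union bound: for a fixed set `S` of size `s`, the event that `s + t` prescribed edges inside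
`S` are all present has probability `p ^ (s + t)`, and there are at most `C(n, s) C(C(s, 2), s + t)`
such choices. For the asymptotics, each admissible term is at most
`(e² · 40 log n) ^ M · ((M + 1) · 40 log n) ^ t / n ^ t` with `M = α t log n / log log n`;
since `M · log log n = α t log n` while `M` and all logarithmic factors are `o(log n)`,
the logarithm of `(M + 1)` times this bound is `-(1 - α) t log n + o(log n)`. -/

open MeasureTheory Filter Real Finset Asymptotics
open scoped Nat

/-- `PMF.bernoulli` as in the older Mathlib: parameter `p : ℝ≥0∞` with `p ≤ 1`. -/
noncomputable def bernoulliENNReal (p : ENNReal) (h : p ≤ 1) : PMF Bool :=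
  PMF.ofFintype (fun b => cond b p (1 - p)) (by simp [h])

section Bernoulli

variable {ι : Type*} [Fintype ι] (p : ENNReal) (hp : p ≤ 1)

lemma pi_bernoulli_forall_true (T : Finset ι) :
    Measure.pi (fun _ : ι => (bernoulliENNReal p hp).toMeasure) {ω | ∀ i ∈ T, ω i = true}
      = p ^ #T := by
  change Measure.pi _ ((T : Set ι).pi fun _ => {true}) = _
  rw [Measure.pi_pi_finset, PMF.toMeasure_apply_singleton _ _ (measurableSet_singleton _)]
  exact prod_const _

lemma pi_bernoulli_card_filter_true_ge_le (A : Finset ι) (k : ℕ) :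
    Measure.pi (fun _ : ι => (bernoulliENNReal p hp).toMeasure) {ω | k ≤ #{i ∈ A | ω i = true}}
      ≤ (#A).choose k * p ^ k := by
  calc _ ≤ Measure.pi (fun _ : ι => (bernoulliENNReal p hp).toMeasure)
          (⋃ T ∈ A.powersetCard k, {ω | ∀ i ∈ T, ω i = true}) := by
        refine measure_mono fun ω hω => ?_
        obtain ⟨T, hTA, hT⟩ := exists_subset_card_eq hω
        simp only [Set.mem_iUnion]
        exact ⟨T, mem_powersetCard.2 ⟨hTA.trans (filter_subset _ _), hT⟩,
          fun i hi => (mem_filter.1 (hTA hi)).2⟩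
    _ ≤ ∑ T ∈ A.powersetCard k,
          Measure.pi (fun _ : ι => (bernoulliENNReal p hp).toMeasure) {ω | ∀ i ∈ T, ω i = true} :=
        measure_biUnion_finset_le _ _
    _ = ∑ T ∈ A.powersetCard k, p ^ k :=
        sum_congr rfl fun T hT => by rw [pi_bernoulli_forall_true, (mem_powersetCard.1 hT).2]
    _ = _ := by rw [sum_const, card_powersetCard, nsmul_eq_mul]

end Bernoulli

lemma card_filter_not_isDiag_forall_mem_le {V : Type*} [Fintype V] [DecidableEq V]
    (S : Finset V) : #{e : Sym2 V | ¬ e.IsDiag ∧ ∀ x ∈ e, x ∈ S} ≤ (#S).choose 2 := by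
  rw [← Sym2.card_image_offDiag]
  refine card_le_card fun e he => ?_
  induction e with
  | _ x y =>
    simp only [mem_filter, mem_univ, true_and, Sym2.mk_isDiag_iff, Sym2.mem_iff,
      forall_eq_or_imp, forall_eq] at he
    exact mem_image.2 ⟨(x, y), mem_offDiag.2 ⟨he.2.1, he.2.2, he.1⟩, rfl⟩

lemma sum_filter_card_eq_sum_range {α R : Type*} [Fintype α] [Semiring R] (P : ℕ → Prop)
    [DecidablePred P] (f : ℕ → R) :
    ∑ S : Finset α with P #S, f #S
      = ∑ s ∈ range (Fintype.card α + 1),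
          if P s then ((Fintype.card α).choose s : R) * f s else 0 := by
  rw [sum_filter, ← powerset_univ, sum_powerset_apply_card (fun s => if P s then f s else 0),
    card_univ]
  refine sum_congr rfl fun s _ => ?_
  split_ifs <;> simp [nsmul_eq_mul]

theorem pi_bernoulli_exists_dense_le {V : Type*} [Fintype V] [DecidableEq V] {q : ℝ}
    (hq : 0 ≤ q) (hp : ENNReal.ofReal q ≤ 1) (M : ℝ) (t : ℕ) :
    Measure.pi (fun _ : Sym2 V => (bernoulliENNReal _ hp).toMeasure)
        {ω | ∃ S : Finset V, (#S : ℝ) ≤ M ∧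
          #S + t ≤ #{e : Sym2 V | ¬ e.IsDiag ∧ (∀ x ∈ e, x ∈ S) ∧ ω e = true}}
      ≤ ENNReal.ofReal (∑ s ∈ range (Fintype.card V + 1),
          if (s : ℝ) ≤ M then
            ((Fintype.card V).choose s : ℝ) * ((s.choose 2).choose (s + t) : ℝ) * q ^ (s + t)
          else 0) := by
  set μ := Measure.pi fun _ : Sym2 V => (bernoulliENNReal _ hp).toMeasure
  let edges (S : Finset V) : Finset (Sym2 V) := {e | ¬ e.IsDiag ∧ ∀ x ∈ e, x ∈ S}
  calc _ ≤ μ (⋃ S ∈ (univ : Finset (Finset V)).filter (fun S => (#S : ℝ) ≤ M),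
            {ω | #S + t ≤ #{e ∈ edges S | ω e = true}}) := by
        refine measure_mono fun ω ⟨S, hSM, hS⟩ => ?_
        simp only [Set.mem_iUnion, mem_filter, mem_univ, true_and]
        exact ⟨S, hSM, by simpa only [Set.mem_ofPred_eq, edges, filter_filter, and_assoc] using hS⟩
    _ ≤ ∑ S : Finset V with (#S : ℝ) ≤ M, μ {ω | #S + t ≤ #{e ∈ edges S | ω e = true}} :=
        measure_biUnion_finset_le _ _
    _ ≤ ∑ S : Finset V with (#S : ℝ) ≤ M,
          ENNReal.ofReal (((#S).choose 2).choose (#S + t) * q ^ (#S + t)) := by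
        refine sum_le_sum fun S _ => (pi_bernoulli_card_filter_true_ge_le _ _ _ _).trans ?_
        rw [ENNReal.ofReal_mul (by positivity), ENNReal.ofReal_pow hq, ENNReal.ofReal_natCast]
        gcongr
        exact card_filter_not_isDiag_forall_mem_le S
    _ = _ := by
        rw [← ENNReal.ofReal_sum_of_nonneg fun _ _ => by positivity,
          sum_filter_card_eq_sum_range (fun s : ℕ => (s : ℝ) ≤ M)
            fun s => ((s.choose 2).choose (s + t) : ℝ) * q ^ (s + t)]
        simp only [mul_assoc]

lemma choose_mul_choose_choose_two_le (n s t : ℕ) :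
    (n.choose s : ℝ) * ((s.choose 2).choose (s + t) : ℝ) ≤ exp (2 * s) * s ^ t * n ^ s := by
  have hs : (0 : ℝ) ≤ s := s.cast_nonneg
  have hchoose : ((s.choose 2).choose (s + t) : ℝ) ≤ ((s : ℝ) ^ 2) ^ (s + t) / (s + t)! :=
    (Nat.choose_le_pow_div _ _).trans (by gcongr; exact_mod_cast Nat.choose_le_pow s 2)
  calc (n.choose s : ℝ) * ((s.choose 2).choose (s + t) : ℝ)
      ≤ n ^ s / s ! * (((s : ℝ) ^ 2) ^ (s + t) / (s + t)!) :=
        mul_le_mul (Nat.choose_le_pow_div _ _) hchoose (by positivity) (by positivity)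
    _ = n ^ s * s ^ t * (s ^ s / s !) * (s ^ (s + t) / (s + t)!) := by ring
    _ ≤ n ^ s * s ^ t * exp s * exp s := by
        gcongr <;> exact pow_div_factorial_le_exp _ hs _
    _ = exp (2 * s) * s ^ t * n ^ s := by rw [two_mul, exp_add]; ring

lemma choose_mul_choose_mul_div_pow_le {n s t : ℕ} (hn : 0 < n) {b M : ℝ} (hb : 1 ≤ b)
    (hsM : (s : ℝ) ≤ M) :
    (n.choose s : ℝ) * ((s.choose 2).choose (s + t) : ℝ) * (b / n) ^ (s + t)
      ≤ (exp 2 * b) ^ M * ((M + 1) * b) ^ t / n ^ t := by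
  have hn' : (0 : ℝ) < n := by exact_mod_cast hn
  have hbase : 1 ≤ exp 2 * b := one_le_mul_of_one_le_of_one_le (one_le_exp (by norm_num)) hb
  calc (n.choose s : ℝ) * ((s.choose 2).choose (s + t) : ℝ) * (b / n) ^ (s + t)
      ≤ exp (2 * s) * s ^ t * n ^ s * (b / n) ^ (s + t) := by
        gcongr ?_ * _
        exact choose_mul_choose_choose_two_le n s t
    _ = (exp 2 * b) ^ (s : ℝ) * (s * b) ^ t / n ^ t := by
        rw [rpow_natCast, mul_comm 2, exp_nat_mul, div_pow, pow_add b, pow_add (n : ℝ)]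
        field_simp
        ring
    _ ≤ (exp 2 * b) ^ M * ((M + 1) * b) ^ t / n ^ t := by
        gcongr
        linarith

lemma natCast_card_filter_range_le_add_one {M : ℝ} (hM : 0 ≤ M) (N : ℕ) :
    (#((range N).filter fun s : ℕ => (s : ℝ) ≤ M) : ℝ) ≤ M + 1 := by
  have hsub : (range N).filter (fun s : ℕ => (s : ℝ) ≤ M) ⊆ range (⌊M⌋₊ + 1) := fun s hs =>
    mem_range_succ_iff.2 (Nat.le_floor (mem_filter.1 hs).2)
  calc (#((range N).filter fun s : ℕ => (s : ℝ) ≤ M) : ℝ) ≤ #(range (⌊M⌋₊ + 1)) := by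
        exact_mod_cast card_le_card hsub
    _ ≤ M + 1 := by
        rw [card_range, Nat.cast_succ]
        gcongr
        exact Nat.floor_le hM

lemma sum_choose_mul_choose_mul_div_pow_le {n : ℕ} (hn : 0 < n) (t : ℕ) {b M : ℝ} (hb : 1 ≤ b)
    (hM : 0 ≤ M) :
    ∑ s ∈ range (n + 1), (if (s : ℝ) ≤ M then
        (n.choose s : ℝ) * ((s.choose 2).choose (s + t) : ℝ) * (b / n) ^ (s + t) else 0)
      ≤ (M + 1) * ((exp 2 * b) ^ M * ((M + 1) * b) ^ t / n ^ t) := by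
  rw [← sum_filter]
  calc _ ≤ ∑ s ∈ (range (n + 1)).filter (fun s : ℕ => (s : ℝ) ≤ M),
           (exp 2 * b) ^ M * ((M + 1) * b) ^ t / n ^ t :=
        sum_le_sum fun s hs => choose_mul_choose_mul_div_pow_le hn hb (mem_filter.1 hs).2
    _ ≤ _ := by
        rw [sum_const, nsmul_eq_mul]
        gcongr
        exact natCast_card_filter_range_le_add_one hM _

lemma mul_rpow_mul_pow_div_pow_eq_exp {M b y : ℝ} (hM : 0 ≤ M) (hb : 0 < b) (hy : 0 < y)
    (t : ℕ) :
    (M + 1) * ((exp 2 * b) ^ M * ((M + 1) * b) ^ t / y ^ t)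
      = exp ((t + 1) * log (M + 1) + t * log b + M * log (exp 2 * b) - t * log y) := by
  rw [exp_sub, exp_add, exp_add, rpow_def_of_pos (by positivity), mul_comm M,
    ← Nat.cast_succ, exp_nat_mul, exp_nat_mul, exp_nat_mul, exp_log (by linarith),
    exp_log hb, exp_log hy, pow_succ, mul_pow]
  ring

lemma tendsto_sub_mul_atBot_of_isLittleO {f : ℝ → ℝ} (hf : f =o[atTop] id) {c : ℝ}
    (hc : 0 < c) : Tendsto (fun x => f x - c * x) atTop atBot := by
  refine tendsto_atBot_mono' _ ?_
    (tendsto_id.const_mul_atTop_of_neg (neg_neg_of_pos (half_pos hc)))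
  filter_upwards [hf.bound (half_pos hc), eventually_ge_atTop 0] with x hfx hx
  rw [norm_eq_abs, id, norm_of_nonneg hx] at hfx
  show f x - c * x ≤ -(c / 2) * x
  linarith [le_abs_self (f x)]

lemma isLittleO_div_log_id : (fun x => x / log x) =o[atTop] id := by
  rw [isLittleO_iff_tendsto'
    (Eventually.of_forall fun x (hx : id x = 0) => by simp [show x = 0 from hx])]
  refine tendsto_log_atTop.inv_tendsto_atTop.congr' ?_
  filter_upwards [eventually_gt_atTop 0] with x hx
  simp only [Pi.inv_apply, id]
  rw [div_right_comm, div_self hx.ne', one_div]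

lemma isLittleO_log_mul_div_log_add_one {a : ℝ} (ha : 0 ≤ a) :
    (fun x => log (a * (x / log x) + 1)) =o[atTop] id := by
  refine IsBigO.trans_isLittleO (IsBigO.of_bound 1 ?_) (isLittleO_div_log_id.const_mul_left a)
  filter_upwards [eventually_ge_atTop 1] with x hx
  have hM : 0 ≤ a * (x / log x) := by have := log_nonneg hx; positivity
  rw [one_mul, norm_of_nonneg (log_nonneg (by linarith)), norm_of_nonneg hM]
  linarith [log_le_sub_one_of_pos (by linarith : 0 < a * (x / log x) + 1)]

lemma isLittleO_log_const_mul {c : ℝ} (hc : 0 < c) : (fun x => log (c * x)) =o[atTop] id :=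
  (isLittleO_log_id_atTop.comp_tendsto (tendsto_id.const_mul_atTop hc)).trans_isBigO
    (isBigO_const_mul_self c id atTop)

lemma tendsto_exponent_atBot {a c t : ℝ} (ha : 0 ≤ a) (hc : 0 < c) (hat : a < t) :
    Tendsto (fun x => (t + 1) * log (a * (x / log x) + 1) + t * log (c * x)
      + a * (x / log x) * log (exp 2 * (c * x)) - t * x) atTop atBot := by
  have hR : (fun x => (t + 1) * log (a * (x / log x) + 1) + t * log (c * x)
      + log (exp 2 * c) * (a * (x / log x))) =o[atTop] id :=
    (((isLittleO_log_mul_div_log_add_one ha).const_mul_left _).add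
      ((isLittleO_log_const_mul hc).const_mul_left _)).add
      ((isLittleO_div_log_id.const_mul_left a).const_mul_left _)
  refine (tendsto_sub_mul_atBot_of_isLittleO hR (sub_pos.2 hat)).congr' ?_
  filter_upwards [eventually_gt_atTop 1] with x hx
  have hcancel : x / log x * log x = x := div_mul_cancel₀ x (log_pos hx).ne'
  rw [← mul_assoc (exp 2), log_mul (x := exp 2 * c) (by positivity) (by linarith)]
  linear_combination (-a) * hcancel

/-- In `G(n, 40 log n / n)` (product of Bernoulli measures over edge slots), for fixed
`t ≥ 1` and `0 < α < 1`, the probability that some set `S` with `|S| ≤ α t L`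
(`L = log n / log log n`) spans at least `|S| + t` edges is bounded by the union-bound
sum `∑_{s ≤ αtL} C(n,s) C(C(s,2), s+t) p^{s+t}`, and this bound tends to `0`. -/
theorem dense_small_sets_unlikely (t : ℕ) (ht : 1 ≤ t) (α : ℝ) (hα0 : 0 < α) (hα1 : α < 1) :
    (∀ n : ℕ, 2 ≤ n →
      ∀ hp : ENNReal.ofReal (40 * Real.log n / n) ≤ 1,
      (Measure.pi fun _ : Sym2 (Fin n) => (bernoulliENNReal _ hp).toMeasure)
        {ω : Sym2 (Fin n) → Bool | ∃ S : Finset (Fin n),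
          (S.card : ℝ) ≤ α * t * (Real.log n / Real.log (Real.log n)) ∧
          S.card + t ≤
            (Finset.univ.filter fun e : Sym2 (Fin n) =>
              ¬ e.IsDiag ∧ (∀ x ∈ e, x ∈ S) ∧ ω e = true).card}
        ≤ ENNReal.ofReal (∑ s ∈ Finset.range (n + 1),
            if (s : ℝ) ≤ α * t * (Real.log n / Real.log (Real.log n)) then
              (n.choose s : ℝ) * ((s.choose 2).choose (s + t) : ℝ) *
                (40 * Real.log n / n) ^ (s + t)
            else 0)) ∧
    Tendsto (fun n : ℕ => ∑ s ∈ Finset.range (n + 1),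
        if (s : ℝ) ≤ α * t * (Real.log n / Real.log (Real.log n)) then
          (n.choose s : ℝ) * ((s.choose 2).choose (s + t) : ℝ) *
            (40 * Real.log n / n) ^ (s + t)
        else 0)
      atTop (nhds 0) := by
  have hlog : Tendsto (fun n : ℕ => log n) atTop atTop :=
    tendsto_log_atTop.comp tendsto_natCast_atTop_atTop
  refine ⟨fun n _ hp => ?_, ?_⟩
  · convert pi_bernoulli_exists_dense_le (V := Fin n) (by positivity) hp
      (α * t * (log n / log (log n))) t using 2
    · -- the two events differ only in the `Decidable` instances of the edge filter
      congr!
    · simp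
  have hαt : α * t < t := mul_lt_of_lt_one_left (by exact_mod_cast ht) hα1
  have hexp := tendsto_exp_atBot.comp
    ((tendsto_exponent_atBot (by positivity) (by norm_num : (0 : ℝ) < 40) hαt).comp hlog)
  refine squeeze_zero' (Eventually.of_forall fun n => sum_nonneg fun s _ => ?_) ?_ hexp
  · split_ifs <;> positivity
  filter_upwards [eventually_gt_atTop 0, hlog.eventually_gt_atTop 1] with n hn hx
  have hM : 0 ≤ α * t * (log n / log (log n)) := by have := log_pos hx; positivity
  exact (sum_choose_mul_choose_mul_div_pow_le hn t (by linarith) hM).trans_eq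
    (mul_rpow_mul_pow_div_pow_eq_exp hM (by positivity) (by positivity) t)
end

section
/- For the lazy random walk on $\mathbb{Z}/k\mathbb{Z}$ with $k \ge 3$, $0 < q \le 1/2$, the gap between the return probability and the transition probability to state 1 satisfies $p_{00}^t - p_{01}^t \ge \frac{1}{k}(1 - \cos(2\pi/k)) \cdot (1 - q + q\cos(2\pi/k))^t > 0$ for all $t \ge 1$. In particular, for fixed $k$ and $q$ the gap decays at most exponentially in $t$ with base $1 - q + q\cos(2\pi/k) < 1$, and for $t = O(\log n/\log\log n)$ the gap is at least $n^{-o(1)}$. -/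
open Finset Real

/-! The lazy walk is a circulant matrix, so it is diagonalised by the characters of `ZMod k`.
With `ψ = ZMod.toCircle` one gets `(Mᵗ)ᵢⱼ = (1/k) ∑ₘ λₘᵗ Re ψ(m(j - i))`, where
`λₘ = 1 - q + q Re ψ(m) = 1 - q + q cos(2πm/k)`. Hence
`p₀₀ᵗ - p₀₁ᵗ = (1/k) ∑ₘ (1 - Re ψ(m)) λₘᵗ`; for `q ≤ 1/2` every `λₘ` is nonnegative, so the
sum is bounded below by its `m = 1` term. -/

theorem AddChar.re_map_add_add_re_map_sub {A : Type*} [AddCommGroup A] (ψ : AddChar A Circle)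
    (a b : A) :
    (ψ (a + b) : ℂ).re + (ψ (a - b) : ℂ).re = 2 * (ψ a : ℂ).re * (ψ b : ℂ).re := by
  rw [ψ.map_add_eq_mul, ψ.map_sub_eq_div, div_eq_mul_inv, Circle.coe_mul, Circle.coe_mul,
    Circle.coe_inv_eq_conj]
  simp only [Complex.mul_re, Complex.conj_re, Complex.conj_im]
  ring

namespace ZMod

variable {k : ℕ} [NeZero k]

theorem sum_re_toCircle_mul (j : ZMod k) :
    ∑ m : ZMod k, (toCircle (m * j) : ℂ).re = if j = 0 then (k : ℝ) else 0 := by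
  have h := AddChar.sum_mulShift j (isPrimitive_stdAddChar k)
  rw [ZMod.card] at h
  simp only [stdAddChar_apply] at h
  rw [← Complex.re_sum, h]
  split_ifs <;> simp

theorem re_toCircle_one : (toCircle (1 : ZMod k) : ℂ).re = cos (2 * π / k) := by
  rw [← Nat.cast_one, toCircle_natCast, Nat.cast_one, mul_one, ← Complex.exp_ofReal_mul_I_re]
  congr 2
  push_cast
  ring

end ZMod

theorem neg_one_lt_cos_two_pi_div {k : ℕ} (hk : 3 ≤ k) : -1 < cos (2 * π / k) := by
  have hk' : (3 : ℝ) ≤ k := by exact_mod_cast hk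
  rw [← Real.cos_pi]
  apply Real.cos_lt_cos_of_nonneg_of_le_pi (by positivity) le_rfl
  rw [div_lt_iff₀ (by positivity)]
  nlinarith [Real.pi_pos]

theorem cos_two_pi_div_lt_one {k : ℕ} (hk : 2 ≤ k) : cos (2 * π / k) < 1 := by
  have hk' : (2 : ℝ) ≤ k := by exact_mod_cast hk
  rw [← Real.cos_zero]
  apply Real.cos_lt_cos_of_nonneg_of_le_pi le_rfl _ (by positivity)
  rw [div_le_iff₀ (by positivity)]
  nlinarith [Real.pi_pos]

noncomputable def lazyWalk (k : ℕ) (q : ℝ) : Matrix (ZMod k) (ZMod k) ℝ :=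
  Matrix.of fun i j =>
    (if j = i then 1 - q else 0) + (if j = i + 1 then q / 2 else 0) +
      (if j = i - 1 then q / 2 else 0)

noncomputable def lazyWalkEigenvalue {k : ℕ} [NeZero k] (q : ℝ) (m : ZMod k) : ℝ :=
  1 - q + q * (ZMod.toCircle m : ℂ).re

section

variable {k : ℕ} [NeZero k] (q : ℝ)

theorem mul_lazyWalk_apply {ι : Type*} (A : Matrix ι (ZMod k) ℝ) (i : ι) (j : ZMod k) :
    (A * lazyWalk k q) i j = (1 - q) * A i j + q / 2 * (A i (j - 1) + A i (j + 1)) := by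
  have h₁ (l : ZMod k) : j = l + 1 ↔ l = j - 1 := eq_comm.trans eq_sub_iff_add_eq.symm
  have h₂ (l : ZMod k) : j = l - 1 ↔ l = j + 1 := eq_sub_iff_add_eq.trans eq_comm
  simp only [Matrix.mul_apply, lazyWalk, Matrix.of_apply, mul_add, mul_ite, mul_zero,
    sum_add_distrib, h₁, h₂, sum_ite_eq, sum_ite_eq', mem_univ, if_true]
  ring

theorem lazyWalk_pow_apply (t : ℕ) (i j : ZMod k) :
    (lazyWalk k q ^ t) i j = (1 / k) * ∑ m : ZMod k,
      lazyWalkEigenvalue q m ^ t * (ZMod.toCircle (m * (j - i)) : ℂ).re := by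
  induction t generalizing j with
  | zero =>
    rw [pow_zero, Matrix.one_apply]
    simp only [pow_zero, one_mul, ZMod.sum_re_toCircle_mul, sub_eq_zero]
    by_cases h : i = j
    · simp [h]
    · simp [h, Ne.symm h]
  | succ t ih =>
    rw [pow_succ, mul_lazyWalk_apply, ih, ih, ih]
    simp only [mul_add, mul_sum, ← sum_add_distrib]
    refine sum_congr rfl fun m _ => ?_
    have hmode := (ZMod.toCircle).re_map_add_add_re_map_sub (m * (j - i)) m
    rw [show m * (j + 1 - i) = m * (j - i) + m by ring,
      show m * (j - 1 - i) = m * (j - i) - m by ring, lazyWalkEigenvalue] at *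
    linear_combination (1 / k * q / 2 * (1 - q + q * (ZMod.toCircle m : ℂ).re) ^ t) * hmode

theorem lazyWalk_pow_zero_zero_sub_zero_one (t : ℕ) :
    (lazyWalk k q ^ t) 0 0 - (lazyWalk k q ^ t) 0 1 =
      (1 / k) * ∑ m : ZMod k,
        (1 - (ZMod.toCircle m : ℂ).re) * lazyWalkEigenvalue q m ^ t := by
  simp only [lazyWalk_pow_apply, sub_zero, mul_zero, mul_one, AddChar.map_zero_eq_one,
    Circle.coe_one, Complex.one_re, ← mul_sub, ← sum_sub_distrib]
  congr 1
  exact sum_congr rfl fun m _ => by ring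

theorem lazyWalkEigenvalue_nonneg (hq₀ : 0 ≤ q) (hq : q ≤ 1 / 2) (m : ZMod k) :
    0 ≤ lazyWalkEigenvalue q m := by
  have h : -1 ≤ (ZMod.toCircle m : ℂ).re :=
    (abs_le.mp ((Complex.abs_re_le_norm _).trans (Circle.norm_coe _).le)).1
  rw [lazyWalkEigenvalue]
  nlinarith

theorem lazyWalkEigenvalue_one :
    lazyWalkEigenvalue q (1 : ZMod k) = 1 - q + q * cos (2 * π / k) := by
  rw [lazyWalkEigenvalue, ZMod.re_toCircle_one]

theorem le_lazyWalk_pow_zero_zero_sub_zero_one (hq₀ : 0 ≤ q) (hq : q ≤ 1 / 2) (t : ℕ) :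
    (1 / (k : ℝ)) * (1 - cos (2 * π / k)) * (1 - q + q * cos (2 * π / k)) ^ t ≤
      (lazyWalk k q ^ t) 0 0 - (lazyWalk k q ^ t) 0 1 := by
  have hterm (m : ZMod k) : 0 ≤ (1 - (ZMod.toCircle m : ℂ).re) * lazyWalkEigenvalue q m ^ t :=
    mul_nonneg (sub_nonneg.mpr ((Complex.re_le_norm _).trans (Circle.norm_coe _).le))
      (pow_nonneg (lazyWalkEigenvalue_nonneg q hq₀ hq m) t)
  rw [lazyWalk_pow_zero_zero_sub_zero_one, mul_assoc,
    ← lazyWalkEigenvalue_one, ← ZMod.re_toCircle_one]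
  gcongr
  exact single_le_sum (fun m _ => hterm m) (mem_univ 1)

end

/-- For the lazy random walk on `ℤ/kℤ` with `k ≥ 3` and `0 < q ≤ 1/2`, for all `t ≥ 1`
the gap between the return probability and the transition probability to state `1`
satisfies `p₀₀ᵗ - p₀₁ᵗ ≥ (1/k)(1 - cos(2π/k))(1 - q + q cos(2π/k))^t > 0`, and the decay
base satisfies `1 - q + q cos(2π/k) < 1`. -/
theorem lazy_walk_gap (k : ℕ) [NeZero k] (hk : 3 ≤ k)
    (q : ℝ) (hq0 : 0 < q) (hq : q ≤ 1 / 2) :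
    let M : Matrix (ZMod k) (ZMod k) ℝ := Matrix.of fun i j =>
      (if j = i then 1 - q else 0) + (if j = i + 1 then q / 2 else 0) +
        (if j = i - 1 then q / 2 else 0)
    (∀ t : ℕ, 1 ≤ t →
      (1 / (k : ℝ)) * (1 - Real.cos (2 * Real.pi / k)) *
          (1 - q + q * Real.cos (2 * Real.pi / k)) ^ t
        ≤ (M ^ t) 0 0 - (M ^ t) 0 1 ∧
      0 < (1 / (k : ℝ)) * (1 - Real.cos (2 * Real.pi / k)) *
          (1 - q + q * Real.cos (2 * Real.pi / k)) ^ t) ∧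
    1 - q + q * Real.cos (2 * Real.pi / k) < 1 := by
  intro M
  have hcos_gt := neg_one_lt_cos_two_pi_div hk
  have hcos_lt := cos_two_pi_div_lt_one (k := k) (by omega)
  have hgap : 0 < 1 - cos (2 * π / k) := by linarith
  have heig : 0 < 1 - q + q * cos (2 * π / k) := by nlinarith
  refine ⟨fun t _ => ⟨le_lazyWalk_pow_zero_zero_sub_zero_one q hq0.le hq t,
    by positivity⟩, by nlinarith⟩
end
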